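/- arXiv:2112.04670 — 2 statements merged into one kernel-verified Lean document; each statement's English description precedes it below -/
import Mathlib

section
/- Let X be a Banach space, Z a closed subspace, E* : X* → Z* the restriction map, and α an ordinal. If A ⊆ Z* is convex and satisfies that the weak* closure of A equals A^{(α+1)} and A^{(α+1)} ≠ A^{(α)}, then D := (E*)^{-1}(A) is a convex subset of X* whose weak* closure equals D^{(α+1)}, and D^{(α+1)} ≠ D^{(α)}. -/
open Set Filter Topology

noncomputable section

namespace Paper

/-- `y` is an up-neighbor of `x` within the subforest `S`: both belong to `S`, `x < y`,
and no vertex of `S` lies strictly between them. -/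
def UpNbrIn {P : Type*} [PartialOrder P] (S : Set P) (x y : P) : Prop :=
  x ∈ S ∧ y ∈ S ∧ x < y ∧ ∀ z ∈ S, ¬(x < z ∧ z < y)

/-- `x` is a terminal vertex of the subforest `S`: it has no up-neighbors within `S`. -/
def TerminalIn {P : Type*} [PartialOrder P] (S : Set P) (x : P) : Prop :=
  x ∈ S ∧ ∀ y, ¬UpNbrIn S x y

/-- One step of the derived forest operation: delete every terminal vertex whose
down-neighbor has infinitely many terminal up-neighbors. -/
def derStep {P : Type*} [PartialOrder P] (S : Set P) : Set P :=
  S \ {x | TerminalIn S x ∧ ∃ u, UpNbrIn S u x ∧ {y | UpNbrIn S u y ∧ TerminalIn S y}.Infinite}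

/-- Transfinite iteration of the derived forest operation: `derIter S β = S^{(β)}`,
with intersections at limit stages. -/
def derIter {P : Type*} [PartialOrder P] (S : Set P) (β : Ordinal) : Set P :=
  Ordinal.limitRecOn β S (fun _ T => derStep T)
    (fun β _ ih => ⋂ (γ : Ordinal), ⋂ (h : γ < β), ih γ h)

/-- Weak* closure of a set in the dual of a real normed space. -/
def wcl {Z : Type*} [NormedAddCommGroup Z] [NormedSpace ℝ Z]
    (A : Set (StrongDual ℝ Z)) : Set (StrongDual ℝ Z) :=
  StrongDual.toWeakDual ⁻¹' closure (StrongDual.toWeakDual '' A)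

/-- The weak* derived set `A^{(1)} = ⋃ₙ weak*-closure (A ∩ n B_{Z*})`. -/
def derSet {Z : Type*} [NormedAddCommGroup Z] [NormedSpace ℝ Z]
    (A : Set (StrongDual ℝ Z)) : Set (StrongDual ℝ Z) :=
  ⋃ n : ℕ, wcl (A ∩ {f | ‖f‖ ≤ (n : ℝ)})

/-- Transfinite weak* derived sets: `A^{(0)} = A`, `A^{(β+1)} = (A^{(β)})^{(1)}`, and
`A^{(β)} = ⋃_{γ<β} A^{(γ)}` at limit stages. -/
def derSetIter {Z : Type*} [NormedAddCommGroup Z] [NormedSpace ℝ Z]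
    (A : Set (StrongDual ℝ Z)) (α : Ordinal) : Set (StrongDual ℝ Z) :=
  Ordinal.limitRecOn α A (fun _ T => derSet T)
    (fun α _ ih => ⋃ (β : Ordinal), ⋃ (h : β < α), ih β h)

/-- The coefficient attached to a vertex `u` of the forest: the label of its down-neighbor,
or the label of `u` itself when `u` is an initial vertex (`n₀ = n₁`). -/
def coefN {P : Type*} [PartialOrder P] (e : P → ℕ) (u : P) : ℕ :=
  letI := Classical.dec (∃ w, w ⋖ u)
  if h : ∃ w, w ⋖ u then e h.choose else e u

/-- The vector `z*(v)` shortened to the subforest `S`: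
`∑_{u ≤ v, u ∈ S} n_{i-1} z*_{n_i}`. -/
def shortVec {P : Type*} [PartialOrder P] {Z : Type*} [NormedAddCommGroup Z] [NormedSpace ℝ Z]
    (e : P → ℕ) (zs : ℕ → StrongDual ℝ Z) (S : Set P) (v : P) : StrongDual ℝ Z :=
  ∑ᶠ u ∈ ({w | w ≤ v} ∩ S), (coefN e u : ℝ) • zs (e u)

/-- The shortening `X^β` of the set `X_α` to the subforest `S` (for `S = (F_α)^β`);
for `S = univ` this is `X_α` itself. -/
def XsetOf {P : Type*} [PartialOrder P] {Z : Type*} [NormedAddCommGroup Z] [NormedSpace ℝ Z]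
    (e : P → ℕ) (zs : ℕ → StrongDual ℝ Z) (S : Set P) : Set (StrongDual ℝ Z) :=
  {x | ∃ v : P, (¬∃ y, v ⋖ y) ∧ x = shortVec e zs S v}

/-- The largest index in the support of a vector of `X^β` (read off by evaluating
against the basic sequence); it is the label of the vertex `v(x)`. -/
def topIdx {Z : Type*} [NormedAddCommGroup Z] [NormedSpace ℝ Z]
    (z : ℕ → Z) (x : StrongDual ℝ Z) : ℕ :=
  sSup {n | x (z n) ≠ 0}

/-- The vector `y(x)`: `x` with the coordinate at its top vertex `v(x)` replaced by `0`. -/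
def truncTop {Z : Type*} [NormedAddCommGroup Z] [NormedSpace ℝ Z]
    (z : ℕ → Z) (zs : ℕ → StrongDual ℝ Z) (x : StrongDual ℝ Z) :
    StrongDual ℝ Z :=
  x - x (z (topIdx z x)) • zs (topIdx z x)

/-!
The restriction `E* = restrictDual Z : X* → Z*` is weak*-continuous, does not increase norms
and, by Hahn–Banach, maps the ball of radius `n` of `X*` onto that of `Z*`. With Banach–Alaoglu
this gives `((E*)⁻¹ B)^{(1)} = (E*)⁻¹ (B^{(1)})`: a point of `B^{(1)}` lifts to a weak* limit `f`
of a bounded set in `(E*)⁻¹ B`, and any other preimage differs from `f` by a functional vanishing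
on `Z`, translation by which preserves `(E*)⁻¹ B` and only enlarges the bound. By transfinite
induction `D^{(β)} = (E*)⁻¹ (A^{(β)})` for every `β`, and the theorem follows because `E*` is
surjective.
-/

open StrongDual

section WeakStar

variable {E F : Type*} [NormedAddCommGroup E] [NormedSpace ℝ E]
  [NormedAddCommGroup F] [NormedSpace ℝ F]

lemma subset_wcl (A : Set (StrongDual ℝ E)) : A ⊆ wcl A := fun _ ha =>
  subset_closure (X := WeakDual ℝ E) (mem_image_of_mem _ ha)

lemma wcl_mono {A B : Set (StrongDual ℝ E)} (h : A ⊆ B) : wcl A ⊆ wcl B :=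
  preimage_mono (closure_mono (image_mono h))

lemma wcl_wcl (A : Set (StrongDual ℝ E)) : wcl (wcl A) = wcl A := by
  rw [wcl, wcl, image_preimage_eq _ toWeakDual.surjective, closure_closure]

lemma wcl_minimal {S A : Set (StrongDual ℝ E)} (h : S ⊆ wcl A) : wcl S ⊆ wcl A :=
  (wcl_mono h).trans (wcl_wcl A).subset

lemma norm_le_of_mem_wcl {S : Set (StrongDual ℝ E)} {r : ℝ} (hS : ∀ f ∈ S, ‖f‖ ≤ r)
    {f : StrongDual ℝ E} (hf : f ∈ wcl S) : ‖f‖ ≤ r := by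
  have hball : closure (toWeakDual '' S) ⊆ WeakDual.toStrongDual ⁻¹' Metric.closedBall 0 r :=
    closure_minimal (by rintro _ ⟨g, hg, rfl⟩; simpa using hS g hg)
      (WeakDual.isClosed_closedBall 0 r)
  exact mem_closedBall_zero_iff.1 (hball hf)

lemma derSet_subset_wcl {S A : Set (StrongDual ℝ E)} (h : S ⊆ wcl A) : derSet S ⊆ wcl A :=
  iUnion_subset fun _ => wcl_minimal (inter_subset_left.trans h)

lemma derSetIter_zero (A : Set (StrongDual ℝ E)) : derSetIter A 0 = A :=
  Ordinal.limitRecOn_zero _ _ _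

lemma derSetIter_add_one (A : Set (StrongDual ℝ E)) (β : Ordinal) :
    derSetIter A (β + 1) = derSet (derSetIter A β) :=
  Ordinal.limitRecOn_add_one _ _ _ _

lemma derSetIter_limit (A : Set (StrongDual ℝ E)) {β : Ordinal} (h : Order.IsSuccLimit β) :
    derSetIter A β = ⋃ γ < β, derSetIter A γ :=
  Ordinal.limitRecOn_limit _ _ _ _ h

lemma derSetIter_subset_wcl (A : Set (StrongDual ℝ E)) (β : Ordinal) :
    derSetIter A β ⊆ wcl A := by
  induction β using Ordinal.limitRecOn with
  | zero => rw [derSetIter_zero]; exact subset_wcl A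
  | add_one γ ih => rw [derSetIter_add_one]; exact derSet_subset_wcl ih
  | limit γ hγ ih => rw [derSetIter_limit A hγ]; exact iUnion₂_subset ih

def WeakStarContinuous (φ : StrongDual ℝ E → StrongDual ℝ F) : Prop :=
  Continuous fun f : WeakDual ℝ E => toWeakDual (φ (WeakDual.toStrongDual f))

lemma weakStarContinuous_add_const (w : StrongDual ℝ E) : WeakStarContinuous (· + w) :=
  continuous_add_const (toWeakDual w)

lemma WeakStarContinuous.mapsTo_wcl {φ : StrongDual ℝ E → StrongDual ℝ F}
    (hφ : WeakStarContinuous φ) {S : Set (StrongDual ℝ E)} {T : Set (StrongDual ℝ F)}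
    (h : MapsTo φ S T) : MapsTo φ (wcl S) (wcl T) := fun _ hx =>
  map_mem_closure (X := WeakDual ℝ E) (Y := WeakDual ℝ F) hφ hx
    (by rintro _ ⟨f, hf, rfl⟩; exact mem_image_of_mem _ (h hf))

/-- Banach–Alaoglu: a weak*-continuous map sends the weak*-closure of a bounded set onto a
weak*-compact, hence weak*-closed, set. -/
lemma WeakStarContinuous.wcl_image_subset {φ : StrongDual ℝ E → StrongDual ℝ F}
    (hφ : WeakStarContinuous φ) {S : Set (StrongDual ℝ E)} {r : ℝ} (hS : ∀ f ∈ S, ‖f‖ ≤ r) :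
    wcl (φ '' S) ⊆ φ '' wcl S := by
  have hcompact : IsCompact (closure (toWeakDual '' S)) :=
    (WeakDual.isCompact_closedBall 0 r).of_isClosed_subset isClosed_closure
      fun g hg => by simpa using norm_le_of_mem_wcl hS (f := WeakDual.toStrongDual g) hg
  have hclosed := (hcompact.image hφ).isClosed
  intro x hx
  obtain ⟨g, hg, hgx⟩ := closure_minimal (by
    rintro _ ⟨_, ⟨f, hf, rfl⟩, rfl⟩
    exact ⟨toWeakDual f, subset_closure (mem_image_of_mem _ hf), rfl⟩) hclosed hx
  exact ⟨WeakDual.toStrongDual g, hg, toWeakDual.injective hgx⟩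

end WeakStar

section Restriction

variable {X : Type*} [NormedAddCommGroup X] [NormedSpace ℝ X] (Z : Submodule ℝ X)

def restrictDual : StrongDual ℝ X →L[ℝ] StrongDual ℝ Z :=
  (ContinuousLinearMap.compL ℝ Z X ℝ).flip Z.subtypeL

@[simp]
lemma restrictDual_apply (f : StrongDual ℝ X) (z : Z) : restrictDual Z f z = f z := rfl

lemma norm_restrictDual_le (f : StrongDual ℝ X) : ‖restrictDual Z f‖ ≤ ‖f‖ :=
  ContinuousLinearMap.opNorm_le_bound _ (norm_nonneg f) fun z => by
    simpa using f.le_opNorm (z : X)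

lemma exists_restrictDual_eq_norm_eq (g : StrongDual ℝ Z) :
    ∃ f : StrongDual ℝ X, restrictDual Z f = g ∧ ‖f‖ = ‖g‖ := by
  obtain ⟨f, hext, hnorm⟩ := exists_extension_norm_eq Z g
  exact ⟨f, ContinuousLinearMap.ext hext, hnorm⟩

lemma restrictDual_surjective : Function.Surjective (restrictDual Z) := fun g =>
  (exists_restrictDual_eq_norm_eq Z g).imp fun _ => And.left

lemma weakStarContinuous_restrictDual : WeakStarContinuous (restrictDual Z) :=
  WeakDual.continuous_of_continuous_eval fun z => WeakDual.eval_continuous (z : X)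

lemma wcl_preimage_restrictDual_subset (A : Set (StrongDual ℝ Z)) :
    wcl (restrictDual Z ⁻¹' A) ⊆ restrictDual Z ⁻¹' wcl A :=
  (weakStarContinuous_restrictDual Z).mapsTo_wcl (mapsTo_preimage _ A)

lemma derSet_preimage_restrictDual (B : Set (StrongDual ℝ Z)) :
    derSet (restrictDual Z ⁻¹' B) = restrictDual Z ⁻¹' derSet B := by
  refine subset_antisymm (iUnion_subset fun n => ?_) fun x hx => ?_
  · have hball : MapsTo (restrictDual Z) (restrictDual Z ⁻¹' B ∩ {f | ‖f‖ ≤ (n : ℝ)})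
        (B ∩ {g | ‖g‖ ≤ (n : ℝ)}) := fun f hf => ⟨hf.1, (norm_restrictDual_le Z f).trans hf.2⟩
    exact fun x hx =>
      mem_iUnion.2 ⟨n, (weakStarContinuous_restrictDual Z).mapsTo_wcl hball hx⟩
  obtain ⟨n, hn⟩ := mem_iUnion.1 hx
  set T := restrictDual Z ⁻¹' B ∩ {f | ‖f‖ ≤ (n : ℝ)}
  have hlift : B ∩ {g | ‖g‖ ≤ (n : ℝ)} ⊆ restrictDual Z '' T := by
    rintro g ⟨hgB, hgn⟩
    obtain ⟨f, rfl, hf⟩ := exists_restrictDual_eq_norm_eq Z g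
    exact ⟨f, ⟨hgB, hf.trans_le hgn⟩, rfl⟩
  obtain ⟨f, hfT, hfx⟩ := (weakStarContinuous_restrictDual Z).wcl_image_subset
    (fun _ hf => hf.2) (wcl_mono hlift hn)
  set w := x - f
  have hw : restrictDual Z w = 0 := by simp [w, hfx]
  obtain ⟨m, hm⟩ := exists_nat_ge ((n : ℝ) + ‖w‖)
  have htrans : MapsTo (· + w) T (restrictDual Z ⁻¹' B ∩ {f | ‖f‖ ≤ (m : ℝ)}) :=
    fun g hg => ⟨by simpa [hw] using hg.1,
      (norm_add_le _ _).trans (by linarith [show ‖g‖ ≤ n from hg.2])⟩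
  refine mem_iUnion.2 ⟨m, ?_⟩
  simpa [w] using (weakStarContinuous_add_const w).mapsTo_wcl htrans hfT

lemma derSetIter_preimage_restrictDual (B : Set (StrongDual ℝ Z)) (β : Ordinal) :
    derSetIter (restrictDual Z ⁻¹' B) β = restrictDual Z ⁻¹' derSetIter B β := by
  induction β using Ordinal.limitRecOn with
  | zero => simp only [derSetIter_zero]
  | add_one γ ih => rw [derSetIter_add_one, derSetIter_add_one, ih, derSet_preimage_restrictDual]
  | limit γ hγ ih =>
      rw [derSetIter_limit _ hγ, derSetIter_limit _ hγ, preimage_iUnion₂]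
      exact iUnion₂_congr ih

end Restriction

theorem statement3_general {X : Type*} [NormedAddCommGroup X] [NormedSpace ℝ X]
    (Z : Submodule ℝ X)
    (A : Set (StrongDual ℝ ↥Z)) (α : Ordinal)
    (hA : Convex ℝ A)
    (h1 : wcl A = derSetIter A (α + 1))
    (h2 : derSetIter A (α + 1) ≠ derSetIter A α) :
    Convex ℝ ((fun f : StrongDual ℝ X => f.comp Z.subtypeL) ⁻¹' A) ∧
    wcl ((fun f : StrongDual ℝ X => f.comp Z.subtypeL) ⁻¹' A)
      = derSetIter ((fun f : StrongDual ℝ X => f.comp Z.subtypeL) ⁻¹' A) (α + 1) ∧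
    derSetIter ((fun f : StrongDual ℝ X => f.comp Z.subtypeL) ⁻¹' A) (α + 1)
      ≠ derSetIter ((fun f : StrongDual ℝ X => f.comp Z.subtypeL) ⁻¹' A) α := by
  have hiter := derSetIter_preimage_restrictDual Z A
  refine ⟨hA.linear_preimage (restrictDual Z).toLinearMap, ?_, fun h => ?_⟩
  · refine subset_antisymm ?_ (derSetIter_subset_wcl _ _)
    calc wcl (restrictDual Z ⁻¹' A) ⊆ restrictDual Z ⁻¹' wcl A :=
          wcl_preimage_restrictDual_subset Z A
      _ = derSetIter (restrictDual Z ⁻¹' A) (α + 1) := by rw [h1, hiter]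
  · exact h2 <| (restrictDual_surjective Z).preimage_injective <| by
      rw [← hiter, ← hiter]; exact h

theorem statement3 {X : Type*} [NormedAddCommGroup X] [NormedSpace ℝ X] [CompleteSpace X]
    (Z : Submodule ℝ X) (hZ : IsClosed (Z : Set X))
    (A : Set (StrongDual ℝ ↥Z)) (α : Ordinal)
    (hA : Convex ℝ A)
    (h1 : wcl A = derSetIter A (α + 1))
    (h2 : derSetIter A (α + 1) ≠ derSetIter A α) :
    Convex ℝ ((fun f : StrongDual ℝ X => f.comp Z.subtypeL) ⁻¹' A) ∧
    wcl ((fun f : StrongDual ℝ X => f.comp Z.subtypeL) ⁻¹' A)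
      = derSetIter ((fun f : StrongDual ℝ X => f.comp Z.subtypeL) ⁻¹' A) (α + 1) ∧
    derSetIter ((fun f : StrongDual ℝ X => f.comp Z.subtypeL) ⁻¹' A) (α + 1)
      ≠ derSetIter ((fun f : StrongDual ℝ X => f.comp Z.subtypeL) ⁻¹' A) α :=
  statement3_general Z A α hA h1 h2

end Paper
end
end

section
/- For every countable ordinal α, the derived forest of order α of F_{α+1} is isomorphic to F_1, and the derived forest of order α+1 of F_{α+1} is isomorphic to F_0: (F_{α+1})^α = F_1 and (F_{α+1})^{α+1} = F_0. -/
open Set Filter Topology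

noncomputable section

namespace Paper

/-!
Write `F_{γ+1}` as a root `⊥` below `ℵ₀` rooted trees `T_n`: copies of `F_γ` when `γ` is zero
or a successor, and the `F_{β_n}` when `γ` is a limit. Inductively, `T_n` collapses to its root
exactly at stage `σ_n ≤ γ` (`σ_n = γ`, resp. `σ_n = β_n`), so before stage `γ` only finitely many
`T_n` have collapsed. As long as that is so, `⊥` has finitely many terminal up-neighbors and the
derivation acts on each `T_n` separately. At stage `γ` all the `T_n` are single roots, so what
is left is `⊥` with `ℵ₀` leaves, i.e. `F_1`, and the next derivation deletes all of them.
-/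

section DerivedForest

variable {P : Type*} [PartialOrder P]

def terminalUpNbrs (S : Set P) (u : P) : Set P := {y | UpNbrIn S u y ∧ TerminalIn S y}

lemma mem_derStep_iff {S : Set P} {x : P} :
    x ∈ derStep S ↔
      x ∈ S ∧ ¬(TerminalIn S x ∧ ∃ u, UpNbrIn S u x ∧ (terminalUpNbrs S u).Infinite) :=
  Iff.rfl

lemma derStep_subset (S : Set P) : derStep S ⊆ S := sdiff_subset

lemma derIter_zero (S : Set P) : derIter S 0 = S := Ordinal.limitRecOn_zero ..

lemma derIter_succ (S : Set P) (β : Ordinal) :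
    derIter S (β + 1) = derStep (derIter S β) :=
  Ordinal.limitRecOn_add_one ..

lemma derIter_limit (S : Set P) {β : Ordinal} (hβ : Order.IsSuccLimit β) :
    derIter S β = ⋂ γ < β, derIter S γ :=
  Ordinal.limitRecOn_limit _ _ _ _ hβ

lemma derIter_antitone (S : Set P) : Antitone (derIter S) := by
  intro γ β hγβ
  induction β using Ordinal.limitRecOn with
  | zero => rw [nonpos_iff_eq_zero.mp hγβ]
  | add_one β ih =>
    rcases hγβ.eq_or_lt with rfl | hlt
    · rfl
    · rw [derIter_succ]
      exact (derStep_subset _).trans (ih (Order.lt_add_one_iff.mp hlt))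
  | limit β hβ _ =>
    rcases hγβ.eq_or_lt with rfl | hlt
    · rfl
    · rw [derIter_limit S hβ]
      exact biInter_subset_of_mem hlt

lemma mem_derStep_of_isBot {S : Set P} {b : P} (hb : IsBot b) (hbS : b ∈ S) : b ∈ derStep S :=
  ⟨hbS, fun ⟨_, u, hu, _⟩ => (hb u).not_gt hu.2.2.1⟩

lemma mem_derIter_of_isBot {S : Set P} {b : P} (hb : IsBot b) (hbS : b ∈ S) (β : Ordinal) :
    b ∈ derIter S β := by
  induction β using Ordinal.limitRecOn with
  | zero => rwa [derIter_zero]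
  | add_one β ih => rw [derIter_succ]; exact mem_derStep_of_isBot hb ih
  | limit β hβ ih => rw [derIter_limit S hβ]; exact mem_iInter₂.mpr ih

lemma exists_upNbrIn (hchain : ∀ x : P, {y | y ≤ x}.Finite) {S : Set P} {x y : P}
    (hx : x ∈ S) (hy : y ∈ S) (hxy : x < y) : ∃ z, UpNbrIn S x z := by
  obtain ⟨z, ⟨hzS, hxz, hzy⟩, hmin⟩ := ((hchain y).subset fun z (hz : z ∈ S ∧ x < z ∧ z ≤ y) =>
    hz.2.2).exists_minimal ⟨y, hy, hxy, le_rfl⟩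
  exact ⟨z, hx, hzS, hxz, fun w hwS ⟨hxw, hwz⟩ =>
    hwz.not_ge (hmin ⟨hwS, hxw, hwz.le.trans hzy⟩ hwz.le)⟩

lemma terminalIn_iff_subset_of_isBot (hchain : ∀ x : P, {y | y ≤ x}.Finite) {S : Set P} {b : P}
    (hb : IsBot b) (hbS : b ∈ S) : TerminalIn S b ↔ S ⊆ {b} := by
  refine ⟨fun ⟨_, hterm⟩ x hx => ?_, fun hS => ⟨hbS, fun y hy => hy.2.2.1.ne' (hS hy.2.1)⟩⟩
  by_contra hne
  obtain ⟨z, hz⟩ := exists_upNbrIn hchain hbS hx ((hb x).lt_of_ne (Ne.symm hne))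
  exact hterm z hz

def IsDerivedRank (b : P) (σ : Ordinal) : Prop :=
  ∀ β, derIter (univ : Set P) β ⊆ {b} ↔ σ ≤ β

lemma isDerivedRank_zero_of_subsingleton [Subsingleton P] (b : P) : IsDerivedRank b 0 :=
  fun _ => iff_of_true (fun x _ => Subsingleton.elim x b) zero_le

lemma derIter_eq_singleton_of_isDerivedRank {b : P} {σ : Ordinal} (hb : IsBot b)
    (h : IsDerivedRank b σ) : derIter (univ : Set P) σ = {b} :=
  ((h σ).mpr le_rfl).antisymm (singleton_subset_iff.mpr (mem_derIter_of_isBot hb (mem_univ _) σ))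

end DerivedForest

section UpperEmbedding

variable {P Q : Type*} [PartialOrder P] [PartialOrder Q] (f : P ↪o Q)
  {T : Set Q} {x y : P}

lemma upNbrIn_map_iff (hf : IsUpperSet (range f)) :
    UpNbrIn T (f x) (f y) ↔ UpNbrIn (f ⁻¹' T) x y := by
  simp only [UpNbrIn, mem_preimage, f.lt_iff_lt]
  refine and_congr_right fun _ => and_congr_right fun _ => and_congr_right fun _ =>
    ⟨fun h w hw => by simpa using h (f w) hw, fun h z hz ⟨hxz, hzy⟩ => ?_⟩
  obtain ⟨w, rfl⟩ := hf hxz.le (mem_range_self x)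
  exact h w hz (by simpa using And.intro hxz hzy)

lemma exists_eq_of_upNbrIn_map (hf : IsUpperSet (range f)) {z : Q}
    (h : UpNbrIn T (f x) z) : ∃ w, f w = z :=
  hf h.2.2.1.le (mem_range_self x)

lemma terminalIn_map_iff (hf : IsUpperSet (range f)) :
    TerminalIn T (f x) ↔ TerminalIn (f ⁻¹' T) x := by
  refine and_congr_right fun _ => ⟨fun h w hw => h (f w) ((upNbrIn_map_iff f hf).mpr hw),
    fun h z hz => ?_⟩
  obtain ⟨w, rfl⟩ := exists_eq_of_upNbrIn_map f hf hz
  exact h w ((upNbrIn_map_iff f hf).mp hz)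

lemma terminalUpNbrs_map (hf : IsUpperSet (range f)) :
    terminalUpNbrs T (f x) = f '' terminalUpNbrs (f ⁻¹' T) x := by
  ext z
  constructor
  · rintro ⟨hz, hterm⟩
    obtain ⟨w, rfl⟩ := exists_eq_of_upNbrIn_map f hf hz
    exact ⟨w, ⟨(upNbrIn_map_iff f hf).mp hz, (terminalIn_map_iff f hf).mp hterm⟩, rfl⟩
  · rintro ⟨w, ⟨hw, hterm⟩, rfl⟩
    exact ⟨(upNbrIn_map_iff f hf).mpr hw, (terminalIn_map_iff f hf).mpr hterm⟩

lemma map_mem_derStep_iff (hf : IsUpperSet (range f))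
    (hdown : ∀ u, UpNbrIn T u (f x) → u ∈ range f) :
    f x ∈ derStep T ↔ x ∈ derStep (f ⁻¹' T) := by
  simp only [mem_derStep_iff, mem_preimage, terminalIn_map_iff f hf]
  refine and_congr_right fun _ => not_congr <| and_congr_right fun _ =>
    ⟨fun ⟨u, hu, hinf⟩ => ?_, fun ⟨w, hw, hinf⟩ => ?_⟩
  · obtain ⟨w, rfl⟩ := hdown u hu
    rw [terminalUpNbrs_map f hf, infinite_image_iff f.injective.injOn] at hinf
    exact ⟨w, (upNbrIn_map_iff f hf).mp hu, hinf⟩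
  · refine ⟨f w, (upNbrIn_map_iff f hf).mpr hw, ?_⟩
    rwa [terminalUpNbrs_map f hf, infinite_image_iff f.injective.injOn]

end UpperEmbedding

section OrderIso

variable {P Q : Type*} [PartialOrder P] [PartialOrder Q] (e : P ≃o Q)

lemma derStep_preimage (T : Set Q) : derStep (e ⁻¹' T) = e ⁻¹' derStep T := by
  have hrange : IsUpperSet (range e.toOrderEmbedding) := by
    simpa using isUpperSet_univ
  ext x
  exact (map_mem_derStep_iff e.toOrderEmbedding hrange fun u _ => by simp).symm

lemma derIter_preimage (T : Set Q) (β : Ordinal) : derIter (e ⁻¹' T) β = e ⁻¹' derIter T β := by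
  induction β using Ordinal.limitRecOn with
  | zero => simp only [derIter_zero]
  | add_one β ih => rw [derIter_succ, derIter_succ, ih, derStep_preimage]
  | limit β hβ ih =>
    simp only [derIter_limit _ hβ, preimage_iInter₂]
    exact iInter₂_congr ih

def preimageOrderIso (A : Set Q) : ↥(e ⁻¹' A) ≃o ↥A where
  toEquiv := e.toEquiv.subtypeEquiv fun _ => Iff.rfl
  map_rel_iff' := e.le_iff_le

end OrderIso

section WithBotSigma

variable {P : ℕ → Type*} [∀ n, PartialOrder (P n)]

def copyEmb (n : ℕ) : P n ↪o WithBot (Σ n, P n) :=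
  OrderEmbedding.ofMapLEIff (fun p => ↑(⟨n, p⟩ : Σ n, P n)) fun _ _ => by
    simp [Sigma.mk_le_mk_iff]

lemma copyEmb_ne_bot (n : ℕ) (p : P n) : copyEmb n p ≠ ⊥ := WithBot.coe_ne_bot

lemma eq_bot_or_exists_copyEmb (x : WithBot (Σ n, P n)) : x = ⊥ ∨ ∃ n p, x = copyEmb n p := by
  rcases x with _ | ⟨n, p⟩
  exacts [.inl rfl, .inr ⟨n, p, rfl⟩]

lemma isUpperSet_range_copyEmb (n : ℕ) : IsUpperSet (range (copyEmb (P := P) n)) := by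
  rintro _ (_ | ⟨m, q⟩) h ⟨p, rfl⟩
  · exact absurd h (WithBot.not_coe_le_bot _)
  · obtain ⟨_, _, q, _⟩ := WithBot.coe_le_coe.mp h
    exact ⟨q, rfl⟩

lemma ext_withBot_sigma {T T' : Set (WithBot (Σ n, P n))} (hbot : ⊥ ∈ T ↔ ⊥ ∈ T')
    (h : ∀ n, copyEmb n ⁻¹' T = copyEmb n ⁻¹' T') : T = T' := by
  ext x
  rcases eq_bot_or_exists_copyEmb x with rfl | ⟨n, p, rfl⟩
  exacts [hbot, Set.ext_iff.mp (h n) p]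

variable {b : ∀ n, P n} {T : Set (WithBot (Σ n, P n))}

lemma eq_bot_of_lt_copyEmb_bot (hb : ∀ n, IsBot (b n)) {n : ℕ} {x : WithBot (Σ n, P n)}
    (h : x < copyEmb n (b n)) : x = ⊥ := by
  rcases eq_bot_or_exists_copyEmb x with rfl | ⟨m, q, rfl⟩
  · rfl
  · obtain ⟨_, _, _, hlt⟩ := WithBot.coe_lt_coe.mp h
    exact absurd hlt (hb _ q).not_gt

lemma injective_copyEmb_root : Function.Injective fun n => copyEmb n (b n) :=
  fun _ _ h => congrArg Sigma.fst (WithBot.coe_injective h)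

lemma upNbrIn_bot_iff (hb : ∀ n, IsBot (b n)) (hbot : ⊥ ∈ T) (hT : ∀ n, copyEmb n (b n) ∈ T)
    {y : WithBot (Σ n, P n)} : UpNbrIn T ⊥ y ↔ ∃ n, copyEmb n (b n) = y := by
  constructor
  · rintro ⟨-, -, hlt, hbet⟩
    rcases eq_bot_or_exists_copyEmb y with rfl | ⟨m, q, rfl⟩
    · exact absurd hlt (lt_irrefl _)
    refine ⟨m, by_contra fun hne => hbet _ (hT m) ⟨bot_lt_iff_ne_bot.mpr (copyEmb_ne_bot _ _), ?_⟩⟩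
    exact (copyEmb m).lt_iff_lt.mpr ((hb m q).lt_of_ne fun h => hne (congrArg _ h))
  · rintro ⟨n, rfl⟩
    exact ⟨hbot, hT n, bot_lt_iff_ne_bot.mpr (copyEmb_ne_bot _ _),
      fun z _ ⟨hz, hzb⟩ => hz.ne' (eq_bot_of_lt_copyEmb_bot hb hzb)⟩

lemma terminalIn_copyEmb_root_iff (hchain : ∀ n (x : P n), {y | y ≤ x}.Finite)
    (hb : ∀ n, IsBot (b n)) (hT : ∀ n, copyEmb n (b n) ∈ T) (n : ℕ) :
    TerminalIn T (copyEmb n (b n)) ↔ copyEmb n ⁻¹' T ⊆ {b n} := by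
  rw [terminalIn_map_iff _ (isUpperSet_range_copyEmb n)]
  exact terminalIn_iff_subset_of_isBot (hchain n) (hb n) (hT n)

lemma infinite_terminalUpNbrs_bot_iff (hchain : ∀ n (x : P n), {y | y ≤ x}.Finite)
    (hb : ∀ n, IsBot (b n)) (hbot : ⊥ ∈ T) (hT : ∀ n, copyEmb n (b n) ∈ T) :
    (terminalUpNbrs T ⊥).Infinite ↔ {m | copyEmb m ⁻¹' T ⊆ {b m}}.Infinite := by
  have : terminalUpNbrs T ⊥ = (fun m => copyEmb m (b m)) '' {m | copyEmb m ⁻¹' T ⊆ {b m}} := by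
    ext y
    simp only [terminalUpNbrs, upNbrIn_bot_iff hb hbot hT, mem_image]
    constructor
    · rintro ⟨⟨m, rfl⟩, hterm⟩
      exact ⟨m, (terminalIn_copyEmb_root_iff hchain hb hT m).mp hterm, rfl⟩
    · rintro ⟨m, hm, rfl⟩
      exact ⟨⟨m, rfl⟩, (terminalIn_copyEmb_root_iff hchain hb hT m).mpr hm⟩
  rw [this, infinite_image_iff injective_copyEmb_root.injOn]

lemma copyEmb_root_mem_derStep_iff (hchain : ∀ n (x : P n), {y | y ≤ x}.Finite)
    (hb : ∀ n, IsBot (b n)) (hbot : ⊥ ∈ T) (hT : ∀ n, copyEmb n (b n) ∈ T) (n : ℕ) :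
    copyEmb n (b n) ∈ derStep T ↔
      ¬(copyEmb n ⁻¹' T ⊆ {b n} ∧ {m | copyEmb m ⁻¹' T ⊆ {b m}}.Infinite) := by
  rw [mem_derStep_iff, ← terminalIn_copyEmb_root_iff hchain hb hT,
    ← infinite_terminalUpNbrs_bot_iff hchain hb hbot hT]
  refine ⟨fun ⟨_, h⟩ ⟨hterm, hinf⟩ => h ⟨hterm, ⊥, (upNbrIn_bot_iff hb hbot hT).mpr ⟨n, rfl⟩, hinf⟩,
    fun h => ⟨hT n, fun ⟨hterm, u, hu, hinf⟩ => h ⟨hterm, ?_⟩⟩⟩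
  rwa [eq_bot_of_lt_copyEmb_bot hb hu.2.2.1] at hinf

lemma copyEmb_mem_derStep_iff_of_ne (hb : ∀ n, IsBot (b n)) (hT : ∀ n, copyEmb n (b n) ∈ T)
    {n : ℕ} {p : P n} (hp : p ≠ b n) :
    copyEmb n p ∈ derStep T ↔ p ∈ derStep (copyEmb n ⁻¹' T) := by
  refine map_mem_derStep_iff _ (isUpperSet_range_copyEmb n) fun u hu => ?_
  rcases eq_bot_or_exists_copyEmb u with rfl | ⟨m, q, rfl⟩
  · -- the root of the `n`-th copy lies strictly between `⊥` and `copyEmb n p`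
    exact absurd ⟨bot_lt_iff_ne_bot.mpr (copyEmb_ne_bot _ _),
      (copyEmb n).lt_iff_lt.mpr ((hb n p).lt_of_ne hp.symm)⟩ (hu.2.2.2 _ (hT n))
  · obtain ⟨_, _, _, _⟩ := WithBot.coe_lt_coe.mp hu.2.2.1
    exact mem_range_self _

lemma preimage_copyEmb_derStep (hchain : ∀ n (x : P n), {y | y ≤ x}.Finite)
    (hb : ∀ n, IsBot (b n)) (hbot : ⊥ ∈ T) (hT : ∀ n, copyEmb n (b n) ∈ T)
    (hfin : {m | copyEmb m ⁻¹' T ⊆ {b m}}.Finite) (n : ℕ) :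
    copyEmb n ⁻¹' derStep T = derStep (copyEmb n ⁻¹' T) := by
  ext p
  by_cases hp : p = b n
  · subst hp
    exact iff_of_true ((copyEmb_root_mem_derStep_iff hchain hb hbot hT n).mpr fun h => h.2 hfin)
      (mem_derStep_of_isBot (hb n) (hT n))
  · exact copyEmb_mem_derStep_iff_of_ne hb hT hp

lemma preimage_copyEmb_derStep_eq_empty (hchain : ∀ n (x : P n), {y | y ≤ x}.Finite)
    (hb : ∀ n, IsBot (b n)) (hbot : ⊥ ∈ T) (hT : ∀ n, copyEmb n (b n) ∈ T)
    (hroots : ∀ m, copyEmb m ⁻¹' T ⊆ {b m}) (n : ℕ) : copyEmb n ⁻¹' derStep T = ∅ := by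
  refine eq_empty_of_forall_notMem fun p hp => ?_
  obtain rfl : p = b n := hroots n (derStep_subset T hp)
  refine (copyEmb_root_mem_derStep_iff hchain hb hbot hT n).mp hp ⟨hroots n, ?_⟩
  simpa [hroots] using infinite_univ

lemma preimage_copyEmb_derIter (hchain : ∀ n (x : P n), {y | y ≤ x}.Finite)
    (hb : ∀ n, IsBot (b n)) {Λ : Ordinal}
    (hfin : ∀ δ < Λ, {m | derIter (univ : Set (P m)) δ ⊆ {b m}}.Finite) :
    ∀ β ≤ Λ, ∀ n, copyEmb n ⁻¹' derIter (univ : Set (WithBot (Σ n, P n))) β = derIter univ β := by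
  intro β
  induction β using Ordinal.limitRecOn with
  | zero => intro _ n; simp only [derIter_zero, preimage_univ]
  | add_one β ih =>
    intro hβ n
    have hβΛ : β < Λ := (Order.lt_succ β).trans_le hβ
    have ih := ih hβΛ.le
    have hroot (m : ℕ) : copyEmb m (b m) ∈ derIter univ β := by
      rw [← mem_preimage, ih]
      exact mem_derIter_of_isBot (hb m) (mem_univ _) β
    rw [derIter_succ, derIter_succ, preimage_copyEmb_derStep hchain hb
      (mem_derIter_of_isBot isBot_bot (mem_univ _) β) hroot (by simpa only [ih] using hfin β hβΛ),
      ih]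
  | limit β hβ ih =>
    intro hβΛ n
    simp only [derIter_limit _ hβ, preimage_iInter₂]
    exact iInter₂_congr fun γ hγ => ih γ hγ (hγ.le.trans hβΛ) n

def rootsEmb (b : ∀ n, P n) (R : Type*) [PartialOrder R] [Subsingleton R] :
    WithBot (Σ _ : ℕ, R) ↪o WithBot (Σ n, P n) :=
  OrderEmbedding.ofMapLEIff (WithBot.map fun a => ⟨a.1, b a.1⟩) fun _ _ =>
    WithBot.map_le_iff _ fun {a c} => by
      obtain ⟨i, r⟩ := a
      obtain ⟨j, s⟩ := c
      constructor
      · rintro ⟨⟩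
        exact Sigma.mk_le_mk_iff.mpr (Subsingleton.elim r s).le
      · rintro ⟨⟩
        exact Sigma.mk_le_mk_iff.mpr le_rfl

lemma preimage_copyEmb_range_rootsEmb (R : Type*) [PartialOrder R] [Subsingleton R]
    [Nonempty R] (n : ℕ) : copyEmb n ⁻¹' range (rootsEmb b R) = {b n} := by
  ext p
  constructor
  · rintro ⟨_ | ⟨m, r⟩, h⟩
    · exact absurd h.symm (copyEmb_ne_bot n p)
    · obtain ⟨rfl, h⟩ := Sigma.mk.inj_iff.mp (WithBot.coe_injective h)
      exact (eq_of_heq h).symm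
  · rintro rfl
    exact ⟨↑(⟨n, Classical.arbitrary R⟩ : Σ _ : ℕ, R), rfl⟩

lemma copyEmb_root_mem_derIter (hchain : ∀ n (x : P n), {y | y ≤ x}.Finite)
    (hb : ∀ n, IsBot (b n)) {Λ : Ordinal}
    (hfin : ∀ δ < Λ, {m | derIter (univ : Set (P m)) δ ⊆ {b m}}.Finite)
    {β : Ordinal} (hβ : β ≤ Λ) (n : ℕ) :
    copyEmb n (b n) ∈ derIter (univ : Set (WithBot (Σ n, P n))) β := by
  rw [← mem_preimage, preimage_copyEmb_derIter hchain hb hfin β hβ]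
  exact mem_derIter_of_isBot (hb n) (mem_univ _) β

lemma derIter_withBot_sigma_eq_range_rootsEmb (hchain : ∀ n (x : P n), {y | y ≤ x}.Finite)
    (hb : ∀ n, IsBot (b n)) {Λ : Ordinal}
    (hfin : ∀ δ < Λ, {m | derIter (univ : Set (P m)) δ ⊆ {b m}}.Finite)
    (hroots : ∀ n, derIter (univ : Set (P n)) Λ ⊆ {b n})
    (R : Type*) [PartialOrder R] [Subsingleton R] [Nonempty R] :
    derIter (univ : Set (WithBot (Σ n, P n))) Λ = range (rootsEmb b R) := by
  refine ext_withBot_sigma (iff_of_true (mem_derIter_of_isBot isBot_bot (mem_univ _) Λ) ⟨⊥, rfl⟩)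
    fun n => ?_
  rw [preimage_copyEmb_derIter hchain hb hfin Λ le_rfl, preimage_copyEmb_range_rootsEmb]
  exact (hroots n).antisymm (singleton_subset_iff.mpr (mem_derIter_of_isBot (hb n) (mem_univ _) Λ))

lemma derIter_withBot_sigma_add_one (hchain : ∀ n (x : P n), {y | y ≤ x}.Finite)
    (hb : ∀ n, IsBot (b n)) {Λ : Ordinal}
    (hfin : ∀ δ < Λ, {m | derIter (univ : Set (P m)) δ ⊆ {b m}}.Finite)
    (hroots : ∀ n, derIter (univ : Set (P n)) Λ ⊆ {b n}) :
    derIter (univ : Set (WithBot (Σ n, P n))) (Λ + 1) = {⊥} := by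
  refine ext_withBot_sigma (iff_of_true (mem_derIter_of_isBot isBot_bot (mem_univ _) _) rfl)
    fun n => ?_
  have hΛ := preimage_copyEmb_derIter hchain hb hfin Λ le_rfl
  rw [derIter_succ, preimage_copyEmb_derStep_eq_empty hchain hb
    (mem_derIter_of_isBot isBot_bot (mem_univ _) Λ) (copyEmb_root_mem_derIter hchain hb hfin le_rfl)
    (fun m => hΛ m ▸ hroots m)]
  exact (eq_empty_of_forall_notMem fun p hp => copyEmb_ne_bot n p hp).symm

lemma isDerivedRank_bot_withBot_sigma (hchain : ∀ n (x : P n), {y | y ≤ x}.Finite)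
    (hb : ∀ n, IsBot (b n)) {Λ : Ordinal}
    (hfin : ∀ δ < Λ, {m | derIter (univ : Set (P m)) δ ⊆ {b m}}.Finite)
    (hroots : ∀ n, derIter (univ : Set (P n)) Λ ⊆ {b n}) :
    IsDerivedRank (⊥ : WithBot (Σ n, P n)) (Λ + 1) := by
  refine fun β => ⟨fun hsub => ?_, fun hle =>
    (derIter_antitone _ hle).trans (derIter_withBot_sigma_add_one hchain hb hfin hroots).subset⟩
  by_contra hlt
  have hβ : β ≤ Λ := Order.lt_add_one_iff.mp (not_le.mp hlt)
  exact copyEmb_ne_bot 0 (b 0) (hsub (copyEmb_root_mem_derIter hchain hb hfin hβ 0))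

theorem exists_isDerivedRank_of_orderIso_withBot_sigma (R : Type*) [PartialOrder R]
    [Subsingleton R] [Nonempty R] {Q : Type*} [PartialOrder Q] (e : Q ≃o WithBot (Σ n, P n))
    (hchain : ∀ n (x : P n), {y | y ≤ x}.Finite) (hb : ∀ n, IsBot (b n)) {σ : ℕ → Ordinal}
    (hrank : ∀ n, IsDerivedRank (b n) (σ n)) {Λ : Ordinal} (hσ : ∀ n, σ n ≤ Λ)
    (hfin : ∀ β < Λ, {n | σ n ≤ β}.Finite) :
    ∃ r : Q, IsBot r ∧ IsDerivedRank r (Λ + 1) ∧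
      Nonempty (derIter (univ : Set Q) Λ ≃o WithBot (Σ _ : ℕ, R)) := by
  have hfin' : ∀ δ < Λ, {m | derIter (univ : Set (P m)) δ ⊆ {b m}}.Finite := by
    simpa only [hrank _ _] using hfin
  have hroots (n : ℕ) : derIter (univ : Set (P n)) Λ ⊆ {b n} := (hrank n Λ).mpr (hσ n)
  have htrans (β : Ordinal) : derIter (univ : Set Q) β = e ⁻¹' derIter univ β := by
    rw [← derIter_preimage, preimage_univ]
  refine ⟨e.symm ⊥, fun x => e.symm_apply_le.mpr bot_le, fun β => ?_, ⟨?_⟩⟩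
  · rw [htrans, ← isDerivedRank_bot_withBot_sigma hchain hb hfin' hroots β]
    simp only [subset_singleton_iff, mem_preimage, e.symm.surjective.forall, e.apply_symm_apply,
      e.symm.injective.eq_iff]
  · rw [htrans, derIter_withBot_sigma_eq_range_rootsEmb hchain hb hfin' hroots R]
    exact (preimageOrderIso e _).trans (rootsEmb b R).orderIso.symm

end WithBotSigma

lemma finite_setOf_le_of_monotone {α : Type*} [Preorder α] {s : ℕ → α} (hs : Monotone s)
    {β : α} (h : ∃ n, β < s n) : {n | s n ≤ β}.Finite := by
  obtain ⟨N, hN⟩ := h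
  exact (finite_Iio N).subset fun n hn => lt_of_not_ge fun hNn => (hN.trans_le (hs hNn)).not_ge hn

theorem statement5
    (V : Ordinal → Type) [∀ γ : Ordinal, PartialOrder (V γ)]
    (seq : Ordinal → ℕ → Ordinal)
    (hV0 : ∀ x y : V 0, x = y) (hV0ne : Nonempty (V 0))
    (hchainfin : ∀ γ : Ordinal, γ.card ≤ Cardinal.aleph0 → ∀ x : V γ, {y : V γ | y ≤ x}.Finite)
    (hchainlin : ∀ γ : Ordinal, γ.card ≤ Cardinal.aleph0 →
      ∀ x y w : V γ, y ≤ x → w ≤ x → y ≤ w ∨ w ≤ y)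
    (hseqmono : ∀ γ : Ordinal, γ.card ≤ Cardinal.aleph0 → Order.IsSuccLimit γ → StrictMono (seq γ))
    (hseqsucc : ∀ γ : Ordinal, γ.card ≤ Cardinal.aleph0 → Order.IsSuccLimit γ →
      ∀ n : ℕ, ∃ δ : Ordinal, seq γ n = δ + 1)
    (hseqlt : ∀ γ : Ordinal, γ.card ≤ Cardinal.aleph0 → Order.IsSuccLimit γ → ∀ n : ℕ, seq γ n < γ)
    (hseqcof : ∀ γ : Ordinal, γ.card ≤ Cardinal.aleph0 → Order.IsSuccLimit γ →
      ∀ δ : Ordinal, δ < γ → ∃ n : ℕ, δ < seq γ n)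
    (hsucc : ∀ γ : Ordinal, γ.card ≤ Cardinal.aleph0 → (γ = 0 ∨ ∃ δ : Ordinal, γ = δ + 1) →
      Nonempty (V (γ + 1) ≃o WithBot (Σ _ : ℕ, V γ)))
    (hlimsucc : ∀ γ : Ordinal, γ.card ≤ Cardinal.aleph0 → Order.IsSuccLimit γ →
      Nonempty (V (γ + 1) ≃o WithBot (V γ)))
    (hlim : ∀ γ : Ordinal, γ.card ≤ Cardinal.aleph0 → Order.IsSuccLimit γ →
      Nonempty (V γ ≃o (Σ n : ℕ, V (seq γ n))))
    (α : Ordinal) (hαc : α.card ≤ Cardinal.aleph0) :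
    Nonempty (↥(derIter (Set.univ : Set (V (α + 1))) α) ≃o V 1) ∧
    Nonempty (↥(derIter (Set.univ : Set (V (α + 1))) (α + 1)) ≃o V 0) := by
  have : Unique (V 0) := { default := hV0ne.some, uniq := fun x => hV0 x _ }
  have hcard {γ δ : Ordinal} (h : δ ≤ γ) (hγ : γ.card ≤ Cardinal.aleph0) :
      δ.card ≤ Cardinal.aleph0 := (Ordinal.card_le_card h).trans hγ
  have key (γ : Ordinal) : γ.card ≤ Cardinal.aleph0 → ∃ r : V (γ + 1), IsBot r ∧
      IsDerivedRank r (γ + 1) ∧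
        Nonempty (derIter (univ : Set (V (γ + 1))) γ ≃o WithBot (Σ _ : ℕ, V 0)) := by
    induction γ using Ordinal.limitRecOn with
    | zero =>
      intro hc
      exact exists_isDerivedRank_of_orderIso_withBot_sigma (V 0) (hsucc 0 hc (.inl rfl)).some
        (fun _ => hchainfin 0 hc) (fun _ => Subsingleton.isBot default)
        (fun _ => isDerivedRank_zero_of_subsingleton default) (fun _ => le_rfl)
        fun _ h => (not_lt_zero h).elim
    | add_one δ ih =>
      intro hc
      obtain ⟨r, hr, hrank, -⟩ := ih (hcard (Order.le_succ δ) hc)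
      exact exists_isDerivedRank_of_orderIso_withBot_sigma (V 0)
        (hsucc _ hc (.inr ⟨δ, rfl⟩)).some (fun _ => hchainfin _ hc) (fun _ => hr)
        (fun _ => hrank) (fun _ => le_rfl) fun β hβ => by simp [not_le.mpr hβ]
    | limit γ hγ ih =>
      intro hc
      have hcopy (n : ℕ) : ∃ r : V (seq γ n), IsBot r ∧ IsDerivedRank r (seq γ n) := by
        obtain ⟨δ, hδ⟩ := hseqsucc γ hc hγ n
        have hδγ : δ < γ := (Order.lt_succ δ).trans_le (hδ ▸ hseqlt γ hc hγ n).le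
        obtain ⟨r, hr, hrank, -⟩ := ih δ hδγ (hcard hδγ.le hc)
        rw [hδ]
        exact ⟨r, hr, hrank⟩
      choose r hr hrank using hcopy
      exact exists_isDerivedRank_of_orderIso_withBot_sigma (V 0)
        ((hlimsucc γ hc hγ).some.trans (hlim γ hc hγ).some.withBotCongr)
        (fun n => hchainfin _ (hcard (hseqlt γ hc hγ n).le hc)) hr hrank
        (fun n => (hseqlt γ hc hγ n).le)
        fun β hβ => finite_setOf_le_of_monotone (hseqmono γ hc hγ).monotone (hseqcof γ hc hγ β hβ)
  obtain ⟨e1⟩ : Nonempty (V 1 ≃o WithBot (Σ _ : ℕ, V 0)) := by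
    rw [← zero_add 1]
    exact hsucc 0 (by simp) (.inl rfl)
  obtain ⟨r, hr, hrank, ⟨iso⟩⟩ := key α hαc
  exact ⟨⟨iso.trans e1.symm⟩, ⟨(OrderIso.setCongr _ _
    (derIter_eq_singleton_of_isDerivedRank hr hrank)).trans (OrderIso.ofUnique _ _)⟩⟩

end Paper
end
end
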